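/- arXiv:1807.01744 — 3 statements merged into one kernel-verified Lean document; each statement's English description precedes it below -/
import Mathlib

section
/- Let L/K be a finite Galois extension of number fields with Galois group G, let C be a conjugacy class of G, and let f be the indicator function of the set S(L/K;C) on nonzero ideals of O_K. Then for every nonzero ideal I of O_K, ∑_{J ⊇ I} μ_K(J)·f(J) = −Q_C(I), where the sum runs over all ideals J of O_K dividing I (i.e., containing I). -/
open NumberField Ideal Filter
open scoped Classical

variable (K : Type) [Field K] [NumberField K]

/-- The Möbius function on ideals of the ring of integers of `K`:
`μ(O_K) = 1`, `μ(I) = (-1)^r` if `I` is a product of `r` distinct primes, `μ(I) = 0`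
if `I` is divisible by the square of a prime. -/
noncomputable def muK (I : Ideal (𝓞 K)) : ℤ :=
  if Squarefree I then (-1) ^ (UniqueFactorizationMonoid.factors I).card else 0

/-- `M(I)`: the maximal norm of a prime divisor of `I` (with `M(O_K) = 1`). -/
noncomputable def maxNorm (I : Ideal (𝓞 K)) : ℕ :=
  if I = ⊤ then 1
  else sSup ((fun p => Ideal.absNorm p) '' {p : Ideal (𝓞 K) | p.IsPrime ∧ p ∣ I})

variable (L : Type) [Field L] [NumberField L] [Algebra K L] [FiniteDimensional K L]
  [IsGalois K L]

/-- The prime ideal `p` of `O_K` is unramified in `L`. -/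
def UnramifiedIn (p : Ideal (𝓞 K)) : Prop :=
  ∀ P : Ideal (𝓞 L), P.IsPrime → P.comap (algebraMap (𝓞 K) (𝓞 L)) = p →
    Ideal.ramificationIdx' (S := 𝓞 L) p P = 1

/-- `σ ∈ Gal(L/K)` is the Frobenius element attached to some prime `P` of `O_L`
above `p`, i.e. `σ x ≡ x ^ N(p) (mod P)` for all `x ∈ O_L`. -/
def IsFrobenius (σ : L ≃ₐ[K] L) (p : Ideal (𝓞 K)) : Prop :=
  ∃ P : Ideal (𝓞 L), P.IsPrime ∧ P ≠ ⊥ ∧ P.comap (algebraMap (𝓞 K) (𝓞 L)) = p ∧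
    ∀ x : 𝓞 L, galRestrict (𝓞 K) K L (𝓞 L) σ x - x ^ Ideal.absNorm p ∈ P

/-- The Artin symbol `[L/K, p]`, i.e. the set of Frobenius elements attached to the
primes of `O_L` above `p`, equals the conjugacy class `C`. -/
def ArtinSymbolEq (p : Ideal (𝓞 K)) (C : ConjClasses (L ≃ₐ[K] L)) : Prop :=
  {σ : L ≃ₐ[K] L | IsFrobenius K L σ p} = C.carrier

/-- `Q_C(I)`: the number of prime divisors `p` of `I` of maximal norm that are
unramified in `L` and have Artin symbol `[L/K, p] = C`. -/
noncomputable def QC (C : ConjClasses (L ≃ₐ[K] L)) (I : Ideal (𝓞 K)) : ℕ :=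
  Nat.card {p : Ideal (𝓞 K) // p.IsPrime ∧ p ∣ I ∧ Ideal.absNorm p = maxNorm K I ∧
    UnramifiedIn K L p ∧ ArtinSymbolEq K L p C}

/-- `I ∈ S(L/K; C)`: `I` is a salient ideal (it has a unique prime divisor of minimal
norm `p = p_min(I)`), `p` is unramified in `L`, and `[L/K, p] = C`. -/
def MemS (C : ConjClasses (L ≃ₐ[K] L)) (I : Ideal (𝓞 K)) : Prop :=
  ∃ p : Ideal (𝓞 K), p.IsPrime ∧ p ∣ I ∧
    (∀ q : Ideal (𝓞 K), q.IsPrime → q ∣ I → q ≠ p →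
      Ideal.absNorm p < Ideal.absNorm q) ∧
    UnramifiedIn K L p ∧ ArtinSymbolEq K L p C

/-! Only squarefree divisors `J ∣ I` contribute; they are the products `∏ T` over sets `T` of prime
divisors of `I`, with `μ_K(∏ T) = (-1)^#T`, and `∏ T ∈ S(L/K; C)` says that `T` has a strict
norm-minimum `p` with `[L/K, p] = C`. Grouping such `T` by `p`, we get `T = {p} ∪ S` for an
arbitrary set `S` of prime divisors of norm `> N(p)`, and the alternating sum over `S` vanishes
unless there is no such prime, i.e. unless `N(p) = M(I)`. -/

open Finset

section StrictMin

variable {α β : Type*} [LinearOrder β]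

def IsStrictMinOn (N : α → β) (T : Finset α) (p : α) : Prop :=
  p ∈ T ∧ ∀ q ∈ T, q ≠ p → N p < N q

theorem IsStrictMinOn.eq {N : α → β} {T : Finset α} {p p' : α} (hp : IsStrictMinOn N T p)
    (hp' : IsStrictMinOn N T p') : p = p' := by
  by_contra hne
  exact lt_asymm (hp.2 p' hp'.1 (Ne.symm hne)) (hp'.2 p hp.1 hne)

theorem isStrictMinOn_insert {N : α → β} {S : Finset α} {p : α} (hS : ∀ q ∈ S, N p < N q) :
    IsStrictMinOn N (insert p S) p := by
  refine ⟨mem_insert_self p S, fun q hq hqp => ?_⟩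
  exact hS q ((mem_insert.mp hq).resolve_left hqp)

theorem sum_powerset_isStrictMinOn_neg_one_pow_card (F : Finset α) (N : α → β) (good : α → Prop)
    [DecidablePred good] :
    ∑ T ∈ F.powerset with ∃ p, IsStrictMinOn N T p ∧ good p, (-1 : ℤ) ^ #T =
      -#{p ∈ F | good p ∧ ∀ q ∈ F, N q ≤ N p} := by
  have hreindex : ∑ T ∈ F.powerset with ∃ p, IsStrictMinOn N T p ∧ good p, (-1 : ℤ) ^ #T =
      ∑ x ∈ {p ∈ F | good p}.sigma fun p => {q ∈ F | N p < N q}.powerset, -(-1 : ℤ) ^ #x.2 := by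
    symm
    refine sum_bij (fun x _ => insert x.1 x.2) ?_ ?_ ?_ ?_
    · rintro ⟨p, S⟩ hx
      simp only [mem_sigma, mem_filter, mem_powerset, subset_iff] at hx ⊢
      refine ⟨fun q hq => ?_, p, isStrictMinOn_insert fun q hq => (hx.2 hq).2, hx.1.2⟩
      rcases mem_insert.mp hq with rfl | hq
      exacts [hx.1.1, (hx.2 hq).1]
    · rintro ⟨p, S⟩ hx ⟨p', S'⟩ hx' heq
      simp only [mem_sigma, mem_filter, mem_powerset, subset_iff] at hx hx' heq
      have hmin := isStrictMinOn_insert (N := N) fun q hq => (hx.2 hq).2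
      have hmin' := isStrictMinOn_insert (N := N) fun q hq => (hx'.2 hq).2
      rw [heq] at hmin
      obtain rfl := hmin.eq hmin'
      have hpS : p ∉ S := fun h => lt_irrefl _ (hx.2 h).2
      have hpS' : p ∉ S' := fun h => lt_irrefl _ (hx'.2 h).2
      rw [← erase_insert hpS, heq, erase_insert hpS']
    · intro T hT
      simp only [mem_filter, mem_powerset] at hT
      obtain ⟨hTF, p, hmin, hgood⟩ := hT
      refine ⟨⟨p, T.erase p⟩, ?_, insert_erase hmin.1⟩
      simp only [mem_sigma, mem_filter, mem_powerset, subset_iff, mem_erase]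
      exact ⟨⟨hTF hmin.1, hgood⟩, fun q hq => ⟨hTF hq.2, hmin.2 q hq.2 hq.1⟩⟩
    · rintro ⟨p, S⟩ hx
      have hpS : p ∉ S := fun h =>
        lt_irrefl _ (mem_filter.mp (mem_powerset.mp (mem_sigma.mp hx).2 h)).2
      rw [card_insert_of_notMem hpS, pow_succ, mul_neg_one]
  rw [hreindex, sum_sigma]
  simp only [sum_neg_distrib, sum_powerset_neg_one_pow_card, sum_boole, filter_filter,
    filter_eq_empty_iff, not_lt]

end StrictMin

section UniqueFactorization

open UniqueFactorizationMonoid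

variable {α : Type*} [CommMonoidWithZero α] [NormalizationMonoid α]
  [UniqueFactorizationMonoid α] [Subsingleton αˣ]

theorem normalizedFactors_finset_prod {T : Finset α} (hT : ∀ p ∈ T, Prime p) :
    normalizedFactors (∏ p ∈ T, p) = T.val := by
  rw [prod_eq_multiset_prod, Multiset.map_id']
  exact normalizedFactors_prod_of_prime hT

theorem squarefree_finset_prod [Nontrivial α] {T : Finset α} (hT : ∀ p ∈ T, Prime p) :
    Squarefree (∏ p ∈ T, p) := by
  rw [squarefree_iff_nodup_normalizedFactors (prod_ne_zero_iff.mpr fun p hp => (hT p hp).ne_zero),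
    normalizedFactors_finset_prod hT]
  exact T.nodup

theorem mem_image_prod_powerset_normalizedFactors [Nontrivial α] {a b : α} (ha : a ≠ 0) :
    b ∈ (normalizedFactors a).toFinset.powerset.image (fun T => ∏ p ∈ T, p) ↔
      b ∣ a ∧ Squarefree b := by
  constructor
  · simp only [mem_image, mem_powerset]
    rintro ⟨T, hT, rfl⟩
    have hprime : ∀ p ∈ T, Prime p := fun p hp =>
      prime_of_normalized_factor p (Multiset.mem_toFinset.mp (hT hp))
    refine ⟨prod_primes_dvd a hprime fun p hp => ?_, squarefree_finset_prod hprime⟩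
    exact dvd_of_mem_normalizedFactors (Multiset.mem_toFinset.mp (hT hp))
  · rintro ⟨hba, hb⟩
    have hb0 : b ≠ 0 := hb.ne_zero
    refine mem_image.mpr ⟨(normalizedFactors b).toFinset, ?_, ?_⟩
    · refine mem_powerset.mpr fun p hp => Multiset.mem_toFinset.mpr ?_
      exact Multiset.mem_of_le ((dvd_iff_normalizedFactors_le_normalizedFactors hb0 ha).mp hba)
        (Multiset.mem_toFinset.mp hp)
    · rw [prod_eq_multiset_prod, Multiset.map_id', Multiset.toFinset_val,
        Multiset.dedup_eq_self.mpr ((squarefree_iff_nodup_normalizedFactors hb0).mp hb)]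
      exact associated_iff_eq.mp (prod_normalizedFactors hb0)

end UniqueFactorization

open UniqueFactorizationMonoid

variable {K L}

theorem muK_finset_prod {T : Finset (Ideal (𝓞 K))} (hT : ∀ p ∈ T, Prime p) :
    muK K (∏ p ∈ T, p) = (-1) ^ #T := by
  rw [muK, if_pos (squarefree_finset_prod hT), factors_eq_normalizedFactors,
    normalizedFactors_finset_prod hT]
  rfl

theorem finsum_muK_mul_eq_sum_powerset {I : Ideal (𝓞 K)} (hI : I ≠ 0) (g : Ideal (𝓞 K) → ℤ) :
    ∑ᶠ J ∈ {J | I ≤ J}, muK K J * g J =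
      ∑ T ∈ (normalizedFactors I).toFinset.powerset, (-1) ^ #T * g (∏ p ∈ T, p) := by
  have hprime : ∀ T ∈ (normalizedFactors I).toFinset.powerset, ∀ p ∈ T, Prime p :=
    fun T hT p hp => prime_of_normalized_factor p (Multiset.mem_toFinset.mp (mem_powerset.mp hT hp))
  rw [finsum_mem_eq_sum_of_subset _ (t := (normalizedFactors I).toFinset.powerset.image
    fun T => ∏ p ∈ T, p), sum_image]
  · exact sum_congr rfl fun T hT => by rw [muK_finset_prod (hprime T hT)]
  · intro T hT T' hT' heq
    rw [← val_inj, ← normalizedFactors_finset_prod (hprime T hT),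
      ← normalizedFactors_finset_prod (hprime T' hT')]
    exact congrArg normalizedFactors heq
  · rintro J ⟨hIJ, hJ⟩
    refine (mem_image_prod_powerset_normalizedFactors hI).mpr ⟨Ideal.dvd_iff_le.mpr hIJ, ?_⟩
    by_contra hsq
    exact hJ (by simp only [muK, if_neg hsq, zero_mul])
  · intro J hJ
    exact Ideal.dvd_iff_le.mp ((mem_image_prod_powerset_normalizedFactors hI).mp hJ).1

theorem mem_toFinset_normalizedFactors_iff {I p : Ideal (𝓞 K)} (hI : I ≠ 0) :
    p ∈ (normalizedFactors I).toFinset ↔ p.IsPrime ∧ p ∣ I := by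
  rw [Multiset.mem_toFinset, Ideal.mem_normalizedFactors_iff hI, Ideal.dvd_iff_le]

omit [NumberField L] [FiniteDimensional K L] in
theorem memS_finset_prod_iff (C : ConjClasses (L ≃ₐ[K] L)) {T : Finset (Ideal (𝓞 K))}
    (hT : ∀ p ∈ T, Prime p) :
    MemS K L C (∏ p ∈ T, p) ↔
      ∃ p, IsStrictMinOn absNorm T p ∧ UnramifiedIn K L p ∧ ArtinSymbolEq K L p C := by
  have hmem : ∀ q, q.IsPrime ∧ q ∣ ∏ p ∈ T, p ↔ q ∈ T := fun q => by
    rw [← mem_toFinset_normalizedFactors_iff (prod_ne_zero_iff.mpr fun p hp => (hT p hp).ne_zero),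
      normalizedFactors_finset_prod hT, val_toFinset]
  constructor
  · rintro ⟨p, hp, hpd, hmin, hgood⟩
    exact ⟨p, ⟨(hmem p).mp ⟨hp, hpd⟩, fun q hq => hmin q ((hmem q).mpr hq).1 ((hmem q).mpr hq).2⟩,
      hgood⟩
  · rintro ⟨p, ⟨hpT, hmin⟩, hgood⟩
    exact ⟨p, ((hmem p).mpr hpT).1, ((hmem p).mpr hpT).2,
      fun q hq hqd => hmin q ((hmem q).mp ⟨hq, hqd⟩), hgood⟩

theorem maxNorm_eq_sup' {I : Ideal (𝓞 K)} (hI : I ≠ 0)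
    (hF : (normalizedFactors I).toFinset.Nonempty) :
    maxNorm K I = (normalizedFactors I).toFinset.sup' hF absNorm := by
  have hItop : I ≠ ⊤ := by
    rintro rfl
    rw [← Ideal.one_eq_top, normalizedFactors_one] at hF
    exact Finset.not_nonempty_empty hF
  have hprimes : {p : Ideal (𝓞 K) | p.IsPrime ∧ p ∣ I} = (normalizedFactors I).toFinset := by
    ext p
    exact (mem_toFinset_normalizedFactors_iff hI).symm
  rw [maxNorm, if_neg hItop, sup'_eq_csSup_image, hprimes]

omit [NumberField L] [FiniteDimensional K L] in
theorem QC_eq_card (C : ConjClasses (L ≃ₐ[K] L)) {I : Ideal (𝓞 K)} (hI : I ≠ 0) :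
    QC K L C I = #{p ∈ (normalizedFactors I).toFinset |
      (UnramifiedIn K L p ∧ ArtinSymbolEq K L p C) ∧
        ∀ q ∈ (normalizedFactors I).toFinset, absNorm q ≤ absNorm p} := by
  rw [QC, ← Nat.card_eq_finsetCard]
  refine Nat.card_congr (Equiv.subtypeEquivRight fun p => ?_)
  rw [mem_filter, mem_toFinset_normalizedFactors_iff hI]
  constructor
  · rintro ⟨hp, hpd, hmax, hgood⟩
    have hpF := (mem_toFinset_normalizedFactors_iff hI).mpr ⟨hp, hpd⟩
    refine ⟨⟨hp, hpd⟩, hgood, fun q hq => ?_⟩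
    rw [hmax, maxNorm_eq_sup' hI ⟨p, hpF⟩]
    exact le_sup' absNorm hq
  · rintro ⟨⟨hp, hpd⟩, hgood, hmax⟩
    have hpF := (mem_toFinset_normalizedFactors_iff hI).mpr ⟨hp, hpd⟩
    rw [maxNorm_eq_sup' hI ⟨p, hpF⟩]
    exact ⟨hp, hpd, le_antisymm (le_sup' absNorm hpF) (sup'_le _ _ hmax), hgood⟩

theorem duality_indicator_S (C : ConjClasses (L ≃ₐ[K] L)) (I : Ideal (𝓞 K)) (hI : I ≠ 0) :
    (∑ᶠ J ∈ {J : Ideal (𝓞 K) | I ≤ J}, muK K J * (if MemS K L C J then 1 else 0)) =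
      -(QC K L C I : ℤ) := by
  rw [finsum_muK_mul_eq_sum_powerset hI, QC_eq_card C hI,
    ← sum_powerset_isStrictMinOn_neg_one_pow_card _ absNorm
      fun p => UnramifiedIn K L p ∧ ArtinSymbolEq K L p C, sum_filter]
  refine sum_congr rfl fun T hT => ?_
  rw [memS_finset_prod_iff C fun p hp => ?_, mul_boole]
  exact prime_of_normalized_factor p (Multiset.mem_toFinset.mp (mem_powerset.mp hT hp))
end

section
/- Let ρ : [0,∞) → ℝ be the Dickman function, i.e., the continuous function with ρ(β) = 1 for 0 ≤ β ≤ 1 that is differentiable on (1,∞) and satisfies −β·ρ'(β) = ρ(β−1) for β > 1. Then ρ(β) ≤ 1/Γ(β+1) for all β ≥ 0, where Γ is the Gamma function. -/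
/-!
Integrating the delay equation `(β ρ(β))' = ρ(β) - ρ(β - 1)` from `1` gives
`β ρ(β) = ∫_{β-1}^{β} ρ`. At a first non-positive value `c` of `ρ` the right-hand side would be
positive, so `ρ > 0`; the equation then makes `ρ` nonincreasing, whence `β ρ(β) ≤ ρ(β - 1)`.
As `Γ(β + 1) = β Γ(β)`, this bound propagates `ρ ≤ 1 / Γ(· + 1)` from `[0, 1]`, where `ρ = 1`
and `Γ ≤ 1` on `[1, 2]` by convexity, to every interval `[n, n + 1]`.
-/

open Set Filter MeasureTheory intervalIntegral

theorem hasDerivAt_integral_sub_const {g : ℝ → ℝ} (hg : Continuous g) (c y : ℝ) :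
    HasDerivAt (fun x => ∫ t in (x - c)..x, g t) (g y - g (y - c)) y := by
  have hprim (x : ℝ) : HasDerivAt (fun u => ∫ t in (0:ℝ)..u, g t) (g x) x :=
    (hg.integral_hasStrictDerivAt 0 x).hasDerivAt
  refine ((hprim y).sub ((hprim (y - c)).comp_sub_const y c)).congr_of_eventuallyEq
    (Eventually.of_forall fun x => ?_)
  exact (integral_interval_sub_left (hg.intervalIntegrable _ _) (hg.intervalIntegrable _ _)).symm

theorem Real.Gamma_le_one_of_mem_Icc {x : ℝ} (hx : x ∈ Icc (1:ℝ) 2) : Real.Gamma x ≤ 1 := by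
  simpa [Real.Gamma_two] using
    Real.convexOn_Gamma.le_max_of_mem_Icc (mem_Ioi.2 one_pos) (mem_Ioi.2 two_pos) hx

structure IsDickmanFunction (ρ : ℝ → ℝ) : Prop where
  continuousOn : ContinuousOn ρ (Ici 0)
  eq_one : ∀ β ∈ Icc (0:ℝ) 1, ρ β = 1
  hasDerivAt : ∀ β > (1:ℝ), HasDerivAt ρ (-ρ (β - 1) / β) β

namespace IsDickmanFunction

variable {ρ : ℝ → ℝ}

theorem intervalIntegrable (h : IsDickmanFunction ρ) {a b : ℝ} (ha : 0 ≤ a) (hb : 0 ≤ b) :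
    IntervalIntegrable ρ volume a b :=
  (h.continuousOn.mono fun _ ht => (le_min ha hb).trans ht.1).intervalIntegrable

theorem mul_eq_integral (h : IsDickmanFunction ρ) {β : ℝ} (hβ : 1 ≤ β) :
    β * ρ β = ∫ t in (β - 1)..β, ρ t := by
  -- a continuous extension of `ρ` to `ℝ`, so that the sliding integral is differentiable everywhere
  set g : ℝ → ℝ := fun t => ρ (max t 0)
  have hg : Continuous g :=
    h.continuousOn.comp_continuous (continuous_id.max continuous_const) fun t => le_max_right t 0
  have hgρ : ∀ t, 0 ≤ t → g t = ρ t := fun t ht => by simp only [g, max_eq_left ht]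
  set φ : ℝ → ℝ := fun x => x * ρ x - ∫ t in (x - 1)..x, g t
  have hφ' : ∀ x ∈ Ioo 1 β, HasDerivAt φ 0 x := by
    intro x hx
    have hx0 : 0 < x := one_pos.trans hx.1
    refine (((hasDerivAt_id' x).mul (h.hasDerivAt x hx.1)).sub
      (hasDerivAt_integral_sub_const hg 1 x)).congr_deriv ?_
    rw [hgρ x hx0.le, hgρ (x - 1) (by linarith [hx.1])]
    field_simp
    ring
  have hφc : ContinuousOn φ (Icc 1 β) :=
    ((continuousOn_id.mul h.continuousOn).mono fun x hx => zero_le_one.trans hx.1).sub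
      (fun x _ => (hasDerivAt_integral_sub_const hg 1 x).continuousAt.continuousWithinAt)
  have hφ1 : φ 1 = 0 := by
    have hg1 : EqOn g 1 (uIcc 0 1) := fun t ht => by
      rw [uIcc_of_le zero_le_one] at ht
      rw [hgρ t ht.1, h.eq_one t ht, Pi.one_apply]
    simp [φ, integral_congr hg1, h.eq_one 1 ⟨zero_le_one, le_rfl⟩]
  have hφβ : φ β = 0 := by
    rcases hβ.eq_or_lt with rfl | hβ
    · exact hφ1
    obtain ⟨c, hc, hslope⟩ := exists_hasDerivAt_eq_slope φ (fun _ => 0) hβ hφc hφ'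
    rwa [hφ1, sub_zero, eq_comm, div_eq_zero_iff, or_iff_left (sub_ne_zero.2 hβ.ne')] at hslope
  refine (sub_eq_zero.1 hφβ).trans (integral_congr fun t ht => hgρ t ?_)
  rw [uIcc_of_le (by linarith)] at ht
  linarith [ht.1]

theorem pos (h : IsDickmanFunction ρ) {β : ℝ} (hβ : 0 ≤ β) : 0 < ρ β := by
  by_contra! hβ'
  set S : Set ℝ := Ici 0 ∩ ρ ⁻¹' Iic 0
  have hS : BddBelow S := ⟨0, fun x hx => hx.1⟩
  have hc : sInf S ∈ S :=
    (h.continuousOn.preimage_isClosed_of_isClosed isClosed_Ici isClosed_Iic).csInf_mem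
      ⟨β, hβ, hβ'⟩ hS
  set c := sInf S
  have hρc : ρ c ≤ 0 := hc.2
  have hc1 : 1 < c := by
    by_contra! hc1
    have := h.eq_one c ⟨hc.1, hc1⟩
    linarith
  have hpos : ∀ t ∈ Ioo (c - 1) c, 0 < ρ t := fun t ht => by
    by_contra! hρt
    linarith [csInf_le hS ⟨(by linarith [ht.1] : (0:ℝ) ≤ t), hρt⟩, ht.2]
  have hint : 0 < ∫ t in (c - 1)..c, ρ t :=
    intervalIntegral_pos_of_pos_on (h.intervalIntegrable (by linarith) (by linarith)) hpos
      (by linarith)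
  have hid := h.mul_eq_integral hc1.le
  nlinarith

theorem antitoneOn (h : IsDickmanFunction ρ) : AntitoneOn ρ (Ici 0) := by
  have hIcc : AntitoneOn ρ (Icc 0 1) := fun a ha b hb _ => by rw [h.eq_one a ha, h.eq_one b hb]
  have hIci : AntitoneOn ρ (Ici 1) := by
    refine antitoneOn_of_hasDerivWithinAt_nonpos (convex_Ici 1)
      (h.continuousOn.mono fun x hx => mem_Ici.2 (zero_le_one.trans hx))
      (fun x hx => (h.hasDerivAt x ?_).hasDerivWithinAt) (fun x hx => ?_)
    all_goals rw [interior_Ici] at hx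
    · exact hx
    · have hx1 : 1 < x := hx
      exact div_nonpos_of_nonpos_of_nonneg (neg_nonpos.2 (h.pos (by linarith)).le) (by linarith)
  rw [← Icc_union_Ici_eq_Ici zero_le_one]
  exact hIcc.union_right hIci (isGreatest_Icc zero_le_one) isLeast_Ici

theorem le_div (h : IsDickmanFunction ρ) {β : ℝ} (hβ : 1 ≤ β) : ρ β ≤ ρ (β - 1) / β := by
  rw [le_div_iff₀ (by linarith), mul_comm, h.mul_eq_integral hβ]
  calc ∫ t in (β - 1)..β, ρ t ≤ ∫ _ in (β - 1)..β, ρ (β - 1) :=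
        integral_mono_on (by linarith) (h.intervalIntegrable (by linarith) (by linarith))
          intervalIntegrable_const fun t ht =>
            h.antitoneOn (mem_Ici.2 (by linarith)) (mem_Ici.2 (by linarith [ht.1])) ht.1
    _ = ρ (β - 1) := by simp

theorem le_one_div_Gamma_of_le_natCast (h : IsDickmanFunction ρ) (n : ℕ) {β : ℝ} (hβ : 0 ≤ β)
    (hβn : β ≤ n + 1) : ρ β ≤ 1 / Real.Gamma (β + 1) := by
  induction n generalizing β with
  | zero =>
    rw [CharP.cast_eq_zero, zero_add] at hβn
    rw [h.eq_one β ⟨hβ, hβn⟩, le_div_iff₀ (Real.Gamma_pos_of_pos (by linarith)), one_mul]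
    exact Real.Gamma_le_one_of_mem_Icc ⟨by linarith, by linarith⟩
  | succ n ih =>
    rcases le_or_gt β (n + 1) with hβn' | hβn'
    · exact ih hβ hβn'
    have hβ1 : 1 < β := by linarith [(Nat.cast_nonneg n : (0:ℝ) ≤ n)]
    have hβ0 : 0 < β := one_pos.trans hβ1
    calc ρ β ≤ ρ (β - 1) / β := h.le_div hβ1.le
      _ ≤ 1 / Real.Gamma (β - 1 + 1) / β := by
        gcongr
        exact ih (by linarith) (by push_cast at hβn; linarith)
      _ = 1 / Real.Gamma (β + 1) := by
        rw [sub_add_cancel, Real.Gamma_add_one hβ0.ne']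
        field_simp

end IsDickmanFunction

theorem dickman_le_one_div_gamma (ρ : ℝ → ℝ)
    (hcont : ContinuousOn ρ (Set.Ici (0:ℝ)))
    (hinit : ∀ β ∈ Set.Icc (0:ℝ) 1, ρ β = 1)
    (hode : ∀ β > (1:ℝ), HasDerivAt ρ (-ρ (β - 1) / β) β) :
    ∀ β ≥ (0:ℝ), ρ β ≤ 1 / Real.Gamma (β + 1) := fun β hβ =>
  IsDickmanFunction.le_one_div_Gamma_of_le_natCast ⟨hcont, hinit, hode⟩ ⌈β⌉₊ hβ
    (by linarith [Nat.le_ceil β])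
end

section
/- Let L/K be a finite Galois extension of number fields and let Y ≤ X be real numbers with Y ≥ 2. Then ∑_{N(p) ≤ Y} Ψ(X/N(p), N(p)) ≤ [K:ℚ]·Ψ(X, Y), where the sum runs over nonzero prime ideals p of O_K with N(p) ≤ Y. -/
/-!
Multiplying a prime `p` with `N(p) ≤ Y` by an `N(p)`-smooth ideal `I` of norm at most `X / N(p)`
gives a `Y`-smooth ideal `J = p I` of norm at most `X` with `M(J) = N(p)`. So `J` determines
`N(p)`, and since `I` is then determined by `p`, each `J` arises from at most as many pairs as
there are primes of norm `M(J)`. Distinct primes of norm `m` all divide `(m)`, whose norm is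
`m ^ [K:ℚ]`, so there are at most `[K:ℚ]` of them.
-/

open NumberField Ideal Filter
open scoped Classical

variable (K : Type) [Field K] [NumberField K]

/-- `Ψ(X, Y)`: the number of nonzero ideals of `O_K` of norm at most `X` all of whose
prime divisors have norm at most `Y` (the `Y`-smooth ideals of norm at most `X`). -/
noncomputable def Psi (X Y : ℝ) : ℕ :=
  Nat.card {I : Ideal (𝓞 K) // I ≠ 0 ∧ (Ideal.absNorm I : ℝ) ≤ X ∧ (maxNorm K I : ℝ) ≤ Y}

variable (L : Type) [Field L] [NumberField L] [Algebra K L] [FiniteDimensional K L]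
  [IsGalois K L]

open Finset

variable {K}

lemma one_lt_absNorm_of_isPrime {p : Ideal (𝓞 K)} (hp : p.IsPrime) (hp0 : p ≠ ⊥) :
    1 < absNorm p := by
  have h0 : absNorm p ≠ 0 := by rwa [Ne, absNorm_eq_zero_iff]
  have h1 : absNorm p ≠ 1 := by rw [Ne, absNorm_eq_one_iff]; exact hp.ne_top
  omega

lemma absNorm_le_maxNorm {I q : Ideal (𝓞 K)} (hI : I ≠ 0) (hq : q.IsPrime) (hqI : q ∣ I) :
    absNorm q ≤ maxNorm K I := by
  have hI_ne_top : I ≠ ⊤ := by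
    rintro rfl
    exact hq.ne_top (top_le_iff.mp (le_of_dvd hqI))
  rw [maxNorm, if_neg hI_ne_top]
  refine le_csSup ⟨absNorm I, ?_⟩ ⟨q, ⟨hq, hqI⟩, rfl⟩
  rintro _ ⟨q', ⟨-, hq'I⟩, rfl⟩
  exact Nat.le_of_dvd (Nat.pos_of_ne_zero (by rwa [Ne, absNorm_eq_zero_iff]))
    (map_dvd absNorm hq'I)

lemma maxNorm_le {I : Ideal (𝓞 K)} {c : ℕ} (hc : 1 ≤ c)
    (h : ∀ q : Ideal (𝓞 K), q.IsPrime → q ∣ I → absNorm q ≤ c) :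
    maxNorm K I ≤ c := by
  rw [maxNorm]
  split_ifs
  · exact hc
  · exact csSup_le' (by rintro _ ⟨q, ⟨hq, hqI⟩, rfl⟩; exact h q hq hqI)

lemma maxNorm_mul_eq_absNorm {p I : Ideal (𝓞 K)} (hp : p.IsPrime) (hp0 : p ≠ ⊥) (hI : I ≠ 0)
    (hIp : maxNorm K I ≤ absNorm p) :
    maxNorm K (p * I) = absNorm p := by
  have hpI : p * I ≠ 0 := mul_ne_zero hp0 hI
  refine le_antisymm (maxNorm_le (one_lt_absNorm_of_isPrime hp hp0).le fun q hq hqpI => ?_)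
    (absNorm_le_maxNorm hpI hp (dvd_mul_right p I))
  have hq0 : q ≠ ⊥ := by
    rintro rfl
    exact hpI (le_bot_iff.mp (le_of_dvd hqpI))
  rcases (prime_of_isPrime hq0 hq).dvd_or_dvd hqpI with hqp | hqI
  · rw [(hp.isMaximal hp0).eq_of_le hq.ne_top (le_of_dvd hqp)]
  · exact (absNorm_le_maxNorm hI hq hqI).trans hIp

lemma card_le_finrank_of_absNorm_eq {m : ℕ} {s : Finset (Ideal (𝓞 K))}
    (hs : ∀ p ∈ s, p.IsPrime ∧ p ≠ ⊥ ∧ absNorm p = m) :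
    #s ≤ Module.finrank ℚ K := by
  rcases s.eq_empty_or_nonempty with rfl | ⟨p₀, hp₀⟩
  · simp
  obtain ⟨hp₀, hp₀0, rfl⟩ := hs p₀ hp₀
  have hprod : ∏ p ∈ s, p ∣ span {(absNorm p₀ : 𝓞 K)} := by
    refine prod_primes_dvd _ (fun p hp => prime_of_isPrime (hs p hp).2.1 (hs p hp).1)
      fun p hp => ?_
    rw [dvd_iff_le, span_singleton_le_iff_mem, ← (hs p hp).2.2]
    exact absNorm_mem p
  have hnorm := map_dvd absNorm hprod
  rw [map_prod, prod_congr rfl fun p hp => (hs p hp).2.2, prod_const, absNorm_span_natCast,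
    RingOfIntegers.rank] at hnorm
  exact (Nat.pow_dvd_pow_iff_le_right (one_lt_absNorm_of_isPrime hp₀ hp₀0)).mp hnorm

variable (K) in
noncomputable def smoothIdeals (X Y : ℝ) : Finset (Ideal (𝓞 K)) :=
  Set.Finite.toFinset (s := {I | I ≠ 0 ∧ (absNorm I : ℝ) ≤ X ∧ (maxNorm K I : ℝ) ≤ Y})
    ((finite_setOfPred_absNorm_le ⌊X⌋₊).subset fun _ hI => Nat.le_floor hI.2.1)

lemma mem_smoothIdeals {X Y : ℝ} {I : Ideal (𝓞 K)} :
    I ∈ smoothIdeals K X Y ↔ I ≠ 0 ∧ (absNorm I : ℝ) ≤ X ∧ (maxNorm K I : ℝ) ≤ Y :=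
  Set.Finite.mem_toFinset _

lemma Psi_eq_card_smoothIdeals (X Y : ℝ) : Psi K X Y = #(smoothIdeals K X Y) :=
  Nat.card_eq_card_finite_toFinset _

lemma mul_mem_smoothIdeals {X Y : ℝ} {p I : Ideal (𝓞 K)} (hp : p.IsPrime) (hp0 : p ≠ ⊥)
    (hpY : (absNorm p : ℝ) ≤ Y) (hI : I ∈ smoothIdeals K (X / absNorm p) (absNorm p)) :
    p * I ∈ smoothIdeals K X Y ∧ maxNorm K (p * I) = absNorm p := by
  obtain ⟨hI0, hIX, hIp⟩ := mem_smoothIdeals.mp hI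
  have hmax := maxNorm_mul_eq_absNorm hp hp0 hI0 (by exact_mod_cast hIp)
  have hp_pos : (0 : ℝ) < absNorm p := by
    exact_mod_cast (one_lt_absNorm_of_isPrime hp hp0).trans' zero_lt_one
  refine ⟨mem_smoothIdeals.mpr ⟨mul_ne_zero hp0 hI0, ?_, by rwa [hmax]⟩, hmax⟩
  rwa [map_mul, Nat.cast_mul, ← le_div_iff₀' hp_pos]

lemma card_filter_mul_eq_le_finrank {s : Finset (Σ _ : Ideal (𝓞 K), Ideal (𝓞 K))}
    (hs : ∀ x ∈ s, x.1.IsPrime ∧ x.1 ≠ ⊥ ∧ maxNorm K (x.1 * x.2) = absNorm x.1)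
    (J : Ideal (𝓞 K)) :
    #{x ∈ s | x.1 * x.2 = J} ≤ Module.finrank ℚ K := by
  rw [← card_image_of_injOn (f := Sigma.fst) fun x hx y hy hxy => ?_]
  · refine card_le_finrank_of_absNorm_eq (m := maxNorm K J) fun p hp => ?_
    obtain ⟨x, hx, rfl⟩ := mem_image.mp hp
    obtain ⟨hx, hxJ⟩ := mem_filter.mp hx
    obtain ⟨hp, hp0, hmax⟩ := hs x hx
    exact ⟨hp, hp0, hxJ ▸ hmax.symm⟩
  obtain ⟨hx, hxJ⟩ := mem_filter.mp hx
  obtain ⟨-, hyJ⟩ := mem_filter.mp hy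
  obtain ⟨p, I⟩ := x
  obtain ⟨p', I'⟩ := y
  cases hxy
  exact congrArg _ (mul_left_cancel₀ (hs _ hx).2.1 (hxJ.trans hyJ.symm))

theorem smooth_count_sum_le_general (X Y : ℝ) :
    (∑ᶠ p ∈ {p : Ideal (𝓞 K) | p.IsPrime ∧ p ≠ ⊥ ∧ (Ideal.absNorm p : ℝ) ≤ Y},
        Psi K (X / (Ideal.absNorm p : ℝ)) (Ideal.absNorm p : ℝ)) ≤
      Module.finrank ℚ K * Psi K X Y := by
  have hP : {p : Ideal (𝓞 K) | p.IsPrime ∧ p ≠ ⊥ ∧ (absNorm p : ℝ) ≤ Y}.Finite :=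
    (finite_setOfPred_absNorm_le ⌊Y⌋₊).subset fun _ hp => Nat.le_floor hp.2.2
  simp_rw [finsum_mem_eq_finite_toFinset_sum _ hP, Psi_eq_card_smoothIdeals, ← card_sigma]
  have hpairs : ∀ x ∈ hP.toFinset.sigma fun p => smoothIdeals K (X / absNorm p) (absNorm p),
      x.1.IsPrime ∧ x.1 ≠ ⊥ ∧
        x.1 * x.2 ∈ smoothIdeals K X Y ∧ maxNorm K (x.1 * x.2) = absNorm x.1 := fun x hx =>
    have ⟨hp, hp0, hpY⟩ := hP.mem_toFinset.mp (mem_sigma.mp hx).1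
    ⟨hp, hp0, mul_mem_smoothIdeals hp hp0 hpY (mem_sigma.mp hx).2⟩
  exact card_le_mul_card_image_of_maps_to (fun x hx => (hpairs x hx).2.2.1) _ fun J _ =>
    card_filter_mul_eq_le_finrank
      (fun x hx => ⟨(hpairs x hx).1, (hpairs x hx).2.1, (hpairs x hx).2.2.2⟩) J

theorem smooth_count_sum_le (X Y : ℝ) (hY : 2 ≤ Y) (hYX : Y ≤ X) :
    (∑ᶠ p ∈ {p : Ideal (𝓞 K) | p.IsPrime ∧ p ≠ ⊥ ∧ (Ideal.absNorm p : ℝ) ≤ Y},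
        Psi K (X / (Ideal.absNorm p : ℝ)) (Ideal.absNorm p : ℝ)) ≤
      Module.finrank ℚ K * Psi K X Y :=
  smooth_count_sum_le_general X Y
end
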